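/- Let α, β ≥ 0 with 2α + 3β < 1 and α + β < 1. Let N be the 3×3 matrix with rows (α/(1-α-β), β/(1-α-β), 0), (α/(1-α-β), β/(1-α-β), 1), (α/(1-α-β), β/(1-α-β), 0). Then the series ∑_{n≥1} Nⁿ converges and equals (1/(1-2α-3β)) times the matrix [[α, β, β], [2α, 2β, 1-2α-β], [α, β, β]]. -/

import Mathlib

/-!
The nonnegative matrix `N` has the positive vector `w = (1, 2, 1)` as a sub-eigenvector:
`N w ≤ ρ w` with `ρ = (1 + a + 2b)/2 < 1`, where `a = α/(1-α-β)`, `b = β/(1-α-β)`.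
Hence `(N ^ k) i j ≤ ρ ^ k w i / w j`, so the powers of `N` are summable. The sum `S` of
`N ^ (k+1)` solves `X = N + N X`, and since `N ^ k → 0` this equation has only one solution;
the claimed matrix is checked to solve it.
-/

open Matrix

section

variable {ι : Type*} [Fintype ι]

theorem Matrix.mulVec_le_mulVec_of_nonneg {α : Type*} [Semiring α] [PartialOrder α]
    [IsOrderedRing α] {A : Matrix ι ι α} (hA : ∀ i j, 0 ≤ A i j) {v w : ι → α} (hvw : v ≤ w) :
    A *ᵥ v ≤ A *ᵥ w := fun i =>
  Finset.sum_le_sum fun j _ => mul_le_mul_of_nonneg_left (hvw j) (hA i j)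

variable [DecidableEq ι]

theorem Matrix.pow_mulVec_le_of_mulVec_le {α : Type*} [CommSemiring α] [PartialOrder α]
    [IsOrderedRing α] {A : Matrix ι ι α} (hA : ∀ i j, 0 ≤ A i j)
    {w : ι → α} {ρ : α} (hρ : 0 ≤ ρ) (hAw : A *ᵥ w ≤ ρ • w) (k : ℕ) :
    A ^ k *ᵥ w ≤ ρ ^ k • w := by
  induction k with
  | zero => simp
  | succ k ih =>
    calc A ^ (k + 1) *ᵥ w = A *ᵥ (A ^ k *ᵥ w) := by rw [pow_succ', mulVec_mulVec]
      _ ≤ A *ᵥ (ρ ^ k • w) := mulVec_le_mulVec_of_nonneg hA ih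
      _ = ρ ^ k • (A *ᵥ w) := mulVec_smul _ _ _
      _ ≤ ρ ^ k • (ρ • w) := smul_le_smul_of_nonneg_left hAw (pow_nonneg hρ k)
      _ = ρ ^ (k + 1) • w := by rw [smul_smul, pow_succ]

theorem Matrix.summable_pow_of_mulVec_le {A : Matrix ι ι ℝ} (hA : ∀ i j, 0 ≤ A i j)
    {w : ι → ℝ} (hw : ∀ i, 0 < w i) {ρ : ℝ} (hρ0 : 0 ≤ ρ) (hρ1 : ρ < 1)
    (hAw : A *ᵥ w ≤ ρ • w) : Summable fun k : ℕ => A ^ k := by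
  refine Pi.summable.mpr fun i => Pi.summable.mpr fun j => ?_
  have hbound (k : ℕ) : (A ^ k) i j ≤ w i / w j * ρ ^ k := by
    rw [div_mul_eq_mul_div, le_div_iff₀ (hw j)]
    calc (A ^ k) i j * w j ≤ (A ^ k *ᵥ w) i :=
          Finset.single_le_sum (f := fun l => (A ^ k) i l * w l)
            (fun l _ => mul_nonneg (pow_apply_nonneg hA k i l) (hw l).le) (Finset.mem_univ j)
      _ ≤ (ρ ^ k • w) i := pow_mulVec_le_of_mulVec_le hA hρ0 hAw k i
      _ = w i * ρ ^ k := mul_comm _ _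
  exact Summable.of_nonneg_of_le (fun k => pow_apply_nonneg hA k i j) hbound
    ((summable_geometric_of_lt_one hρ0 hρ1).mul_left _)

end

theorem hasSum_pow_succ_of_eq_add_mul {R : Type*} [Ring R] [TopologicalSpace R]
    [IsTopologicalRing R] [T2Space R] {A X : R} (hA : Summable fun k : ℕ => A ^ k)
    (hX : X = A + A * X) : HasSum (fun k : ℕ => A ^ (k + 1)) X := by
  obtain ⟨S, hS⟩ := (summable_nat_add_iff 1).mpr hA
  have hSeq : S = A + A * S := by
    have hshift : HasSum (fun k : ℕ => A * A ^ (k + 1)) (S - A) := by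
      simpa [← pow_succ'] using (hasSum_nat_add_iff' 1).mpr hS
    rw [(hS.mul_left A).unique hshift]; abel
  have hfix : A * (X - S) = X - S := by
    conv_rhs => rw [hX, hSeq]
    rw [mul_sub]; abel
  have hpow (k : ℕ) : A ^ k * (X - S) = X - S := by
    induction k with
    | zero => rw [pow_zero, one_mul]
    | succ k ih => rw [pow_succ, mul_assoc, hfix, ih]
  have hlim := hA.tendsto_atTop_zero.mul_const (X - S)
  simp only [hpow, zero_mul] at hlim
  rwa [sub_eq_zero.mp (tendsto_const_nhds_iff.mp hlim)]

theorem mulVec_one_two_one_le {a b : ℝ} (hab : a + 2 * b ≤ 1) :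
    !![a, b, 0; a, b, 1; a, b, 0] *ᵥ ![1, 2, 1] ≤ ((1 + (a + 2 * b)) / 2) • ![1, 2, 1] := by
  intro i
  fin_cases i <;> simp [mulVec, dotProduct, Fin.sum_univ_three] <;> linarith

theorem stmt_6_general (α β : ℝ) (hα : 0 ≤ α) (hβ : 0 ≤ β)
    (h23 : 2 * α + 3 * β < 1)
    (N : Matrix (Fin 3) (Fin 3) ℝ)
    (hN : N = !![α / (1 - α - β), β / (1 - α - β), 0;
                 α / (1 - α - β), β / (1 - α - β), 1;
                 α / (1 - α - β), β / (1 - α - β), 0]) :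
    HasSum (fun n : ℕ => N ^ (n + 1))
      ((1 / (1 - 2 * α - 3 * β)) •
        !![α, β, β; 2 * α, 2 * β, 1 - 2 * α - β; α, β, β]) := by
  have hs : 0 < 1 - α - β := by linarith
  have hd : 1 - 2 * α - 3 * β ≠ 0 := by linarith
  have hab : α / (1 - α - β) + 2 * (β / (1 - α - β)) < 1 := by
    rw [← mul_div_assoc, ← add_div, div_lt_one hs]; linarith
  subst hN
  refine hasSum_pow_succ_of_eq_add_mul ?_ ?_
  · refine summable_pow_of_mulVec_le ?_ (w := ![1, 2, 1]) ?_ (by positivity) (by linarith)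
      (mulVec_one_two_one_le hab.le)
    · intro i j; fin_cases i <;> fin_cases j <;> simp <;> positivity
    · intro i; fin_cases i <;> simp
  · ext i j
    fin_cases i <;> fin_cases j <;> simp <;> field_simp <;> ring

/-- Sum of powers of the offspring mean matrix `N` of the 3-type branching
process of the homogeneous (1,2)-random walk:
`∑_{n≥1} Nⁿ = (1/(1-2α-3β)) [[α,β,β],[2α,2β,1-2α-β],[α,β,β]]`. -/
theorem stmt_6 (α β : ℝ) (hα : 0 ≤ α) (hβ : 0 ≤ β)
    (h23 : 2 * α + 3 * β < 1) (h11 : α + β < 1)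
    (N : Matrix (Fin 3) (Fin 3) ℝ)
    (hN : N = !![α / (1 - α - β), β / (1 - α - β), 0;
                 α / (1 - α - β), β / (1 - α - β), 1;
                 α / (1 - α - β), β / (1 - α - β), 0]) :
    HasSum (fun n : ℕ => N ^ (n + 1))
      ((1 / (1 - 2 * α - 3 * β)) •
        !![α, β, β; 2 * α, 2 * β, 1 - 2 * α - β; α, β, β]) :=
  stmt_6_general α β hα hβ h23 N hN
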